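/- arXiv:2003.06796 — 5 statements merged into one kernel-verified Lean document; each statement's English description precedes it below -/
import Mathlib

section
/- If F : H → H is strongly monotone with constant η > 0 and Lipschitz continuous with constant L on a convex set U, and z* ∈ U satisfies F(z*) = 0, and V ⊆ H is a closed subspace with orthogonal projection P such that there exists z_d ∈ V ∩ U with P F(z_d) = 0, then ‖z_d − z*‖ ≤ (L/η) · dist(z*, V). -/
/-! The Céa argument: `F zs = 0` and Galerkin orthogonality `F zd ⊥ V` turn strong monotonicity
into `η ‖zd - zs‖² ≤ ⟪F zd, v - zs⟫` for every `v ∈ V`, which the Lipschitz bound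
`‖F zd‖ ≤ L ‖zd - zs‖` and Cauchy–Schwarz reduce to `η ‖zd - zs‖ ≤ L ‖zs - v‖`;
taking the infimum over `v` gives the claim. -/

open scoped RealInnerProductSpace

lemma Metric.le_mul_infDist {α : Type*} [PseudoMetricSpace α] {x : α} {s : Set α}
    (hs : s.Nonempty) {c r : ℝ} (hc : 0 < c) (h : ∀ y ∈ s, r ≤ c * dist x y) :
    r ≤ c * Metric.infDist x s := by
  rw [← div_le_iff₀' hc, Metric.le_infDist hs]
  intro y hy
  rw [div_le_iff₀' hc]
  exact h y hy

section Galerkin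

variable {H : Type*} [NormedAddCommGroup H] [InnerProductSpace ℝ H] {V : Submodule ℝ H}

lemma Submodule.inner_sub_eq_of_mem_orthogonal {w u v : H} (hw : w ∈ Vᗮ) (hu : u ∈ V)
    (hv : v ∈ V) (x : H) : ⟪w, u - x⟫ = ⟪w, v - x⟫ := by
  have huv : ⟪w, u - v⟫ = 0 := Submodule.inner_left_of_mem_orthogonal (V.sub_mem hu hv) hw
  rw [← sub_add_sub_cancel u v x, inner_add_right, huv, zero_add]

lemma norm_galerkin_sub_le_mul_dist {F : H → H} {η L : ℝ} (hη : 0 < η) (hL : 0 ≤ L)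
    {zs zd : H} (hmono : η * ‖zd - zs‖ ^ 2 ≤ ⟪F zd - F zs, zd - zs⟫)
    (hlip : ‖F zd - F zs‖ ≤ L * ‖zd - zs‖) (hFzs : F zs = 0)
    (hperp : F zd ∈ Vᗮ) (hzdV : zd ∈ V) {v : H} (hv : v ∈ V) :
    ‖zd - zs‖ ≤ L / η * dist zs v := by
  rw [hFzs, sub_zero] at hmono hlip
  have hsq : η * ‖zd - zs‖ * ‖zd - zs‖ ≤ L * ‖zs - v‖ * ‖zd - zs‖ :=
    calc η * ‖zd - zs‖ * ‖zd - zs‖ = η * ‖zd - zs‖ ^ 2 := by ring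
      _ ≤ ⟪F zd, zd - zs⟫ := hmono
      _ = ⟪F zd, v - zs⟫ := Submodule.inner_sub_eq_of_mem_orthogonal hperp hzdV hv zs
      _ ≤ ‖F zd‖ * ‖v - zs‖ := real_inner_le_norm _ _
      _ ≤ L * ‖zd - zs‖ * ‖v - zs‖ := by gcongr
      _ = L * ‖zs - v‖ * ‖zd - zs‖ := by rw [norm_sub_rev v zs]; ring
  have hlin : η * ‖zd - zs‖ ≤ L * ‖zs - v‖ := by
    rcases (norm_nonneg (zd - zs)).eq_or_lt with h0 | hpos
    · rw [← h0, mul_zero]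
      positivity
    · exact le_of_mul_le_mul_right hsq hpos
  rw [dist_eq_norm, div_mul_eq_mul_div, le_div_iff₀ hη]
  linarith

end Galerkin

theorem galerkin_quasi_optimality_general
    {H : Type*} [NormedAddCommGroup H] [InnerProductSpace ℝ H]
    (F : H → H) (U : Set H) (η L : ℝ) (hη : 0 < η) (hL : 0 < L)
    (hmono : ∀ z₁ ∈ U, ∀ z₂ ∈ U, η * ‖z₁ - z₂‖ ^ 2 ≤ ⟪F z₁ - F z₂, z₁ - z₂⟫)
    (hlip : ∀ z₁ ∈ U, ∀ z₂ ∈ U, ‖F z₁ - F z₂‖ ≤ L * ‖z₁ - z₂‖)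
    (zs : H) (hzs : zs ∈ U) (hFzs : F zs = 0)
    (V : Submodule ℝ H) [V.HasOrthogonalProjection]
    (zd : H) (hzdV : zd ∈ V) (hzdU : zd ∈ U)
    (hgal : Submodule.orthogonalProjectionOnto V (F zd) = 0) :
    ‖zd - zs‖ ≤ (L / η) * Metric.infDist zs (V : Set H) := by
  have hperp : F zd ∈ Vᗮ := Submodule.orthogonalProjectionOnto_eq_zero_iff.mp hgal
  refine Metric.le_mul_infDist ⟨0, V.zero_mem⟩ (div_pos hL hη) fun v hv => ?_
  exact norm_galerkin_sub_le_mul_dist hη hL.le (hmono zd hzdU zs hzs) (hlip zd hzdU zs hzs)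
    hFzs hperp hzdV hv

/-- quasi-optimality of a Galerkin solution for a strongly monotone,
Lipschitz map. -/
theorem galerkin_quasi_optimality
    {H : Type*} [NormedAddCommGroup H] [InnerProductSpace ℝ H] [CompleteSpace H]
    (F : H → H) (U : Set H) (hU : Convex ℝ U) (η L : ℝ) (hη : 0 < η) (hL : 0 < L)
    (hmono : ∀ z₁ ∈ U, ∀ z₂ ∈ U, η * ‖z₁ - z₂‖ ^ 2 ≤ ⟪F z₁ - F z₂, z₁ - z₂⟫)
    (hlip : ∀ z₁ ∈ U, ∀ z₂ ∈ U, ‖F z₁ - F z₂‖ ≤ L * ‖z₁ - z₂‖)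
    (zs : H) (hzs : zs ∈ U) (hFzs : F zs = 0)
    (V : Submodule ℝ H) [V.HasOrthogonalProjection]
    (zd : H) (hzdV : zd ∈ V) (hzdU : zd ∈ U)
    (hgal : Submodule.orthogonalProjectionOnto V (F zd) = 0) :
    ‖zd - zs‖ ≤ (L / η) * Metric.infDist zs (V : Set H) :=
  galerkin_quasi_optimality_general F U η L hη hL hmono hlip zs hzs hFzs V zd hzdV hzdU hgal
end

section
/- Let F : ℝⁿ → ℝⁿ be continuously differentiable with F(z*) = 0. Then F is strongly monotone near z* (i.e., there exist η > 0 and a ball around z* on which ⟨F(z₁)−F(z₂), z₁−z₂⟩ ≥ η‖z₁−z₂‖²) if and only if the Jacobian DF(z*) is coercive, i.e., ⟨x, DF(z*)x⟩ ≥ η*‖x‖² for some η* > 0 and all x. -/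
open scoped RealInnerProductSpace Topology
open Filter Set

/-! Continuity of `DF` spreads the coercivity of `DF(z*)`, with half the constant, to a ball
around `z*`; the mean value theorem applied to `t ↦ ⟪z₁ - z₂, F (z₂ + t • (z₁ - z₂))⟫` turns
this into strong monotonicity on the ball. Conversely, strong monotonicity between `z*` and
`z* + t • v`, divided by `t²`, gives `η ‖v‖² ≤ ⟪v, DF(z*) v⟫` in the limit `t → 0⁺`. -/

section

variable {E : Type*} [NormedAddCommGroup E] [InnerProductSpace ℝ E]

def StrongMonotoneOn (η : ℝ) (F : E → E) (s : Set E) : Prop :=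
  ∀ x ∈ s, ∀ y ∈ s, η * ‖x - y‖ ^ 2 ≤ ⟪F x - F y, x - y⟫

namespace ContinuousLinearMap

def IsCoerciveWith (A : E →L[ℝ] E) (η : ℝ) : Prop :=
  ∀ v, η * ‖v‖ ^ 2 ≤ ⟪v, A v⟫

theorem IsCoerciveWith.mono {A : E →L[ℝ] E} {η η' : ℝ} (hA : A.IsCoerciveWith η) (hη : η' ≤ η) :
    A.IsCoerciveWith η' := fun v =>
  (mul_le_mul_of_nonneg_right hη (sq_nonneg ‖v‖)).trans (hA v)

theorem IsCoerciveWith.sub_opNorm {A : E →L[ℝ] E} {η : ℝ} (hA : A.IsCoerciveWith η)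
    (B : E →L[ℝ] E) : B.IsCoerciveWith (η - ‖B - A‖) := by
  intro v
  have hperturb : |⟪v, (B - A) v⟫| ≤ ‖B - A‖ * ‖v‖ ^ 2 := calc
    |⟪v, (B - A) v⟫| ≤ ‖v‖ * ‖(B - A) v‖ := abs_real_inner_le_norm _ _
    _ ≤ ‖v‖ * (‖B - A‖ * ‖v‖) := by gcongr; exact (B - A).le_opNorm v
    _ = ‖B - A‖ * ‖v‖ ^ 2 := by ring
  have hsplit : ⟪v, B v⟫ = ⟪v, A v⟫ + ⟪v, (B - A) v⟫ := by
    rw [sub_apply, inner_sub_right, add_sub_cancel]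
  rw [hsplit]
  linarith [hA v, neg_abs_le ⟪v, (B - A) v⟫]

theorem IsCoerciveWith.eventually_of_continuousAt {X : Type*} [TopologicalSpace X]
    {A : X → E →L[ℝ] E} {x : X} {η η' : ℝ} (hA : ContinuousAt A x)
    (hx : (A x).IsCoerciveWith η) (hη' : η' < η) :
    ∀ᶠ y in 𝓝 x, (A y).IsCoerciveWith η' := by
  filter_upwards [hA (Metric.ball_mem_nhds (A x) (sub_pos.2 hη'))] with y hy
  rw [mem_preimage, Metric.mem_ball, dist_eq_norm] at hy
  exact (hx.sub_opNorm (A y)).mono (by linarith)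

end ContinuousLinearMap

theorem HasFDerivAt.isCoerciveWith_of_eventually {F : E → E} {F' : E →L[ℝ] E} {z : E}
    {η : ℝ} (hF : HasFDerivAt F F' z)
    (hmono : ∀ᶠ y in 𝓝 z, η * ‖y - z‖ ^ 2 ≤ ⟪F y - F z, y - z⟫) :
    F'.IsCoerciveWith η := by
  intro v
  have hslope : Tendsto (fun t : ℝ => ⟪v, t⁻¹ • (F (z + t • v) - F z)⟫) (𝓝[>] 0)
      (𝓝 ⟪v, F' v⟫) :=
    tendsto_const_nhds.inner (hF.hasLineDerivAt v).tendsto_slope_zero_right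
  have hline : Tendsto (fun t : ℝ => z + t • v) (𝓝[>] 0) (𝓝 z) := by
    have : Continuous fun t : ℝ => z + t • v := by fun_prop
    simpa using (this.tendsto 0).mono_left nhdsWithin_le_nhds
  refine ge_of_tendsto hslope ?_
  filter_upwards [hline.eventually hmono, self_mem_nhdsWithin] with t ht (htpos : 0 < t)
  rw [add_sub_cancel_left, norm_smul, Real.norm_eq_abs, mul_pow, sq_abs,
    real_inner_smul_right, real_inner_comm] at ht
  rw [real_inner_smul_right, le_inv_mul_iff₀ htpos]
  exact le_of_mul_le_mul_left (by linarith) htpos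

theorem Convex.strongMonotoneOn_of_hasFDerivAt {s : Set E} (hs : Convex ℝ s) {F : E → E}
    {F' : E → E →L[ℝ] E} {η : ℝ} (hF : ∀ p ∈ s, HasFDerivAt F (F' p) p)
    (hF' : ∀ p ∈ s, (F' p).IsCoerciveWith η) : StrongMonotoneOn η F s := by
  intro x hx y hy
  set d := x - y
  have hseg : ∀ t ∈ Icc (0 : ℝ) 1, y + t • d ∈ s := fun t ht => hs.add_smul_sub_mem hy hx ht
  have hφ : ∀ t ∈ Icc (0 : ℝ) 1,
      HasDerivAt (fun t : ℝ => ⟪d, F (y + t • d)⟫) ⟪d, F' (y + t • d) d⟫ t := by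
    intro t ht
    have hline : HasDerivAt (fun t : ℝ => y + t • d) d t := by
      simpa using ((hasDerivAt_id t).smul_const d).const_add y
    simpa using (hasDerivAt_const t d).inner ℝ ((hF _ (hseg t ht)).comp_hasDerivAt t hline)
  obtain ⟨c, hc, hslope⟩ := exists_hasDerivAt_eq_slope _ _ zero_lt_one
    (fun t ht => (hφ t ht).continuousAt.continuousWithinAt)
    (fun t ht => hφ t (Ioo_subset_Icc_self ht))
  have hend : y + (1 : ℝ) • d = x := by simp [d]
  simp only [hend, zero_smul, add_zero, sub_zero, div_one] at hslope
  calc η * ‖x - y‖ ^ 2 ≤ ⟪d, F' (y + c • d) d⟫ := hF' _ (hseg c (Ioo_subset_Icc_self hc)) d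
    _ = ⟪F x - F y, x - y⟫ := by rw [hslope, ← inner_sub_right, real_inner_comm]

end

theorem strongMonotone_near_root_iff_jacobian_coercive_general
    {n : ℕ} (F : EuclideanSpace ℝ (Fin n) → EuclideanSpace ℝ (Fin n))
    (hF : ContDiff ℝ 1 F)
    (zs : EuclideanSpace ℝ (Fin n)) :
    (∃ η > (0 : ℝ), ∃ δ > (0 : ℝ),
        ∀ z₁ ∈ Metric.ball zs δ, ∀ z₂ ∈ Metric.ball zs δ,
          η * ‖z₁ - z₂‖ ^ 2 ≤ ⟪F z₁ - F z₂, z₁ - z₂⟫) ↔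
      (∃ ηs > (0 : ℝ), ∀ x, ηs * ‖x‖ ^ 2 ≤ ⟪x, fderiv ℝ F zs x⟫) := by
  have hdiff : Differentiable ℝ F := hF.differentiable one_ne_zero
  constructor
  · rintro ⟨η, hη, δ, hδ, hmono⟩
    have hmono_at : ∀ᶠ y in 𝓝 zs, η * ‖y - zs‖ ^ 2 ≤ ⟪F y - F zs, y - zs⟫ :=
      eventually_of_mem (Metric.ball_mem_nhds zs hδ) fun y hy =>
        hmono y hy zs (Metric.mem_ball_self hδ)
    exact ⟨η, hη, (hdiff zs).hasFDerivAt.isCoerciveWith_of_eventually hmono_at⟩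
  · rintro ⟨ηs, hηs, hcoer⟩
    have hnear : ∀ᶠ p in 𝓝 zs, (fderiv ℝ F p).IsCoerciveWith (ηs / 2) :=
      ContinuousLinearMap.IsCoerciveWith.eventually_of_continuousAt
        (hF.continuous_fderiv one_ne_zero).continuousAt hcoer (half_lt_self hηs)
    obtain ⟨δ, hδ, hball⟩ := Metric.eventually_nhds_iff_ball.1 hnear
    exact ⟨ηs / 2, half_pos hηs, δ, hδ,
      (convex_ball zs δ).strongMonotoneOn_of_hasFDerivAt (fun p _ => (hdiff p).hasFDerivAt) hball⟩

/-- a C¹ map is locally strongly monotone near a root iff its Jacobian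
at the root is coercive. -/
theorem strongMonotone_near_root_iff_jacobian_coercive
    {n : ℕ} (F : EuclideanSpace ℝ (Fin n) → EuclideanSpace ℝ (Fin n))
    (hF : ContDiff ℝ 1 F)
    (zs : EuclideanSpace ℝ (Fin n)) (hzs : F zs = 0) :
    (∃ η > (0 : ℝ), ∃ δ > (0 : ℝ),
        ∀ z₁ ∈ Metric.ball zs δ, ∀ z₂ ∈ Metric.ball zs δ,
          η * ‖z₁ - z₂‖ ^ 2 ≤ ⟪F z₁ - F z₂, z₁ - z₂⟫) ↔
      (∃ ηs > (0 : ℝ), ∀ x, ηs * ‖x‖ ^ 2 ≤ ⟪x, fderiv ℝ F zs x⟫) :=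
  strongMonotone_near_root_iff_jacobian_coercive_general F hF zs
end

section
/- Let E : ℝⁿ × ℝⁿ → ℝ be smooth, R the flip map R(x,y) = (y,x), and F = R∘∇E the flipped gradient with F(Z*) = 0 and DF(Z*) coercive with constant η > 0. Let θ : ℝⁿ×ℝⁿ → ℝⁿ×ℝⁿ be a smooth diffeomorphism, W* = θ⁻¹(Z*), M* = Dθ(W*), and F_θ = R∘∇(E∘θ). If M* commutes with R, then ⟨X, DF_θ(W*) X⟩ ≥ η‖M*⁻¹‖⁻²‖X‖² for all X, i.e., DF_θ(W*) is coercive with constant η‖M*⁻¹‖⁻². -/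
open scoped RealInnerProductSpace

noncomputable section

/-- The flip (swap) map `R(x, y) = (y, x)` on the Hilbert-space product `ℝⁿ × ℝⁿ`. -/
def flipP {n : ℕ} (Z : WithLp 2 (EuclideanSpace ℝ (Fin n) × EuclideanSpace ℝ (Fin n))) :
    WithLp 2 (EuclideanSpace ℝ (Fin n) × EuclideanSpace ℝ (Fin n)) :=
  (WithLp.equiv 2 _).symm ((WithLp.equiv 2 _ Z).2, (WithLp.equiv 2 _ Z).1)

abbrev VV (n : ℕ) := WithLp 2 (EuclideanSpace ℝ (Fin n) × EuclideanSpace ℝ (Fin n))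

def flipE {n : ℕ} : VV n ≃L[ℝ] VV n :=
  (WithLp.prodContinuousLinearEquiv 2 ℝ _ _).trans
    ((ContinuousLinearEquiv.prodComm ℝ _ _).trans
      (WithLp.prodContinuousLinearEquiv 2 ℝ _ _).symm)

lemma inner_flipP {n : ℕ} (u v : VV n) : ⟪flipP u, v⟫ = ⟪u, flipP v⟫ := by
  simp [flipP, WithLp.prod_inner_apply]
  ring

instance contSMulVV {n : ℕ} : ContinuousSMul ℝ (VV n) := IsBoundedSMul.continuousSMul

lemma key_inner {n : ℕ} (f : VV n → ℝ) (hf : ContDiff ℝ (⊤ : ℕ∞) f) (x u v : VV n) :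
    ⟪u, fderiv ℝ (fun Z => flipP (gradient f Z)) x v⟫ =
      (fderiv ℝ (fderiv ℝ f) x v) (flipP u) := by
  have h1 : DifferentiableAt ℝ (fderiv ℝ f) x :=
    (hf.fderiv_right (m := (⊤ : ℕ∞)) (by simp)).differentiable (by simp) x
  set e := (InnerProductSpace.toDual ℝ (VV n)).symm with he
  set K := fderiv ℝ (fderiv ℝ f) x with hK
  have h2 : HasFDerivAt (fun Z => flipP (gradient f Z))
      ((flipE.toContinuousLinearMap.comp
        e.toContinuousLinearEquiv.toContinuousLinearMap).comp K) x :=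
    (flipE.toContinuousLinearMap.hasFDerivAt.comp x
      (e.toContinuousLinearEquiv.toContinuousLinearMap.hasFDerivAt.comp x h1.hasFDerivAt))
  rw [h2.fderiv]
  have : ((flipE.toContinuousLinearMap.comp
        e.toContinuousLinearEquiv.toContinuousLinearMap).comp K) v = flipP (e (K v)) := rfl
  rw [this, ← inner_flipP, real_inner_comm]
  exact InnerProductSpace.toDual_symm_apply

/-- coordinate-change theorem for the flipped gradient, commuting case. -/
theorem flipped_gradient_coordinate_change_commuting
    {n : ℕ}
    (E : WithLp 2 (EuclideanSpace ℝ (Fin n) × EuclideanSpace ℝ (Fin n)) → ℝ)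
    (hE : ContDiff ℝ (⊤ : ℕ∞) E)
    (θ θinv : WithLp 2 (EuclideanSpace ℝ (Fin n) × EuclideanSpace ℝ (Fin n)) →
      WithLp 2 (EuclideanSpace ℝ (Fin n) × EuclideanSpace ℝ (Fin n)))
    (hθ : ContDiff ℝ (⊤ : ℕ∞) θ) (hθinv : ContDiff ℝ (⊤ : ℕ∞) θinv)
    (hleft : Function.LeftInverse θinv θ) (hright : Function.RightInverse θinv θ)
    (Zs : WithLp 2 (EuclideanSpace ℝ (Fin n) × EuclideanSpace ℝ (Fin n)))
    (η : ℝ) (hη : 0 < η)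
    (hroot : flipP (gradient E Zs) = 0)
    (hcoer : ∀ X, η * ‖X‖ ^ 2 ≤ ⟪X, fderiv ℝ (fun Z => flipP (gradient E Z)) Zs X⟫)
    (M : WithLp 2 (EuclideanSpace ℝ (Fin n) × EuclideanSpace ℝ (Fin n)) ≃L[ℝ]
      WithLp 2 (EuclideanSpace ℝ (Fin n) × EuclideanSpace ℝ (Fin n)))
    (hM : ∀ X, M X = fderiv ℝ θ (θinv Zs) X)
    (hcomm : ∀ X, M (flipP X) = flipP (M X)) :
    ∀ X, η * (‖(M.symm :
          WithLp 2 (EuclideanSpace ℝ (Fin n) × EuclideanSpace ℝ (Fin n)) →L[ℝ]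
          WithLp 2 (EuclideanSpace ℝ (Fin n) × EuclideanSpace ℝ (Fin n)))‖ ^ 2)⁻¹ *
        ‖X‖ ^ 2 ≤
      ⟪X, fderiv ℝ (fun W => flipP (gradient (E ∘ θ) W)) (θinv Zs) X⟫ := by
  intro X
  set W : VV n := θinv Zs with hW
  have hθW : θ W = Zs := hright Zs
  have hEθ : ContDiff ℝ (⊤ : ℕ∞) (E ∘ θ) := hE.comp hθ
  -- gradient and fderiv of E vanish at Zs
  have hg0 : gradient E Zs = 0 := congrArg flipP hroot
  have hfE0 : fderiv ℝ E Zs = 0 := by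
    have h := congrArg (InnerProductSpace.toDual ℝ (VV n)) hg0
    simpa [gradient] using h
  -- differentiability facts
  have hdE2 : DifferentiableAt ℝ (fderiv ℝ E) (θ W) :=
    (hE.fderiv_right (m := (⊤ : ℕ∞)) (by simp)).differentiable (by simp) (θ W)
  have hdθ : DifferentiableAt ℝ θ W := hθ.differentiable (by simp) W
  have hdc : DifferentiableAt ℝ (fun W' => fderiv ℝ E (θ W')) W := hdE2.comp W hdθ
  have hdd : DifferentiableAt ℝ (fderiv ℝ θ) W :=
    (hθ.fderiv_right (m := (⊤ : ℕ∞)) (by simp)).differentiable (by simp) W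
  have hcomp : fderiv ℝ (E ∘ θ) = fun W' => (fderiv ℝ E (θ W')).comp (fderiv ℝ θ W') :=
    funext fun W' =>
      fderiv_comp W' (hE.differentiable (by simp) (θ W')) (hθ.differentiable (by simp) W')
  have hdcW : fderiv ℝ (fun W' => fderiv ℝ E (θ W')) W =
      (fderiv ℝ (fderiv ℝ E) Zs).comp (fderiv ℝ θ W) := by
    have h := fderiv_comp W hdE2 hdθ
    rw [hθW] at h
    exact h
  -- value of the Hessian of E ∘ θ
  have hval : (fderiv ℝ (fderiv ℝ (E ∘ θ)) W X) (flipP X) =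
      (fderiv ℝ (fderiv ℝ E) Zs (M X)) (flipP (M X)) := by
    rw [hcomp, fderiv_clm_comp hdc hdd]
    simp only [ContinuousLinearMap.add_apply, ContinuousLinearMap.coe_comp',
      Function.comp_apply, ContinuousLinearMap.compL_apply, ContinuousLinearMap.flip_apply,
      hθW, hfE0, ContinuousLinearMap.zero_comp, ContinuousLinearMap.zero_apply, zero_add,
      ContinuousLinearMap.comp_apply]
    rw [hdcW]
    simp only [ContinuousLinearMap.coe_comp', Function.comp_apply]
    rw [← hM X, ← hM (flipP X), hcomm X]
  -- coercivity transported
  have hK := key_inner (E ∘ θ) hEθ W X X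
  have hKE := key_inner E hE Zs (M X) (M X)
  have hmain : η * ‖M X‖ ^ 2 ≤
      ⟪X, fderiv ℝ (fun W' => flipP (gradient (E ∘ θ) W')) W X⟫ := by
    rw [hK, hval, ← hKE]
    exact hcoer (M X)
  -- norm estimate
  set s : ℝ := ‖(M.symm : VV n →L[ℝ] VV n)‖ with hs
  have hXle : ‖X‖ ≤ s * ‖M X‖ := by
    have h1 : ‖X‖ = ‖(M.symm : VV n →L[ℝ] VV n) (M X)‖ := by simp
    rw [h1]
    exact ContinuousLinearMap.le_opNorm _ _
  have hfin : η * (s ^ 2)⁻¹ * ‖X‖ ^ 2 ≤ η * ‖M X‖ ^ 2 := by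
    rcases eq_or_lt_of_le (norm_nonneg (M.symm : VV n →L[ℝ] VV n)) with h0 | hpos
    · have hs0 : s = 0 := h0.symm
      rw [hs0]
      norm_num
      positivity
    · have hsq : ‖X‖ ^ 2 ≤ s ^ 2 * ‖M X‖ ^ 2 := by
        have h3 := pow_le_pow_left₀ (norm_nonneg X) hXle 2
        rwa [mul_pow] at h3
      have hs2 : (0:ℝ) < s ^ 2 := by positivity
      have h2 : (s ^ 2)⁻¹ * ‖X‖ ^ 2 ≤ ‖M X‖ ^ 2 := by
        rw [inv_mul_le_iff₀ hs2]
        exact hsq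
      calc η * (s ^ 2)⁻¹ * ‖X‖ ^ 2 = η * ((s ^ 2)⁻¹ * ‖X‖ ^ 2) := by ring
        _ ≤ η * ‖M X‖ ^ 2 := mul_le_mul_of_nonneg_left h2 hη.le
  exact hfin.trans hmain

end
end

section
/- Let Λ be a nilpotent element of a commutative ℚ-algebra and let G_n(Λ) be the unique nilpotent element with exp(G_n(Λ)) = (e^Λ)_n (the degree-n Taylor truncation of exp). Then G_n(Λ) − Λ lies in the ideal generated by Λ^{n+1}; equivalently, G_n(Λ) = Λ + Λ^{n+1}·q(Λ) for some polynomial q with rational coefficients. -/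
noncomputable section

/-- The (finite) exponential series of an element of a commutative `ℚ`-algebra;
for a nilpotent element this equals the full exponential series. -/
def nilExp {R : Type*} [CommRing R] [Algebra ℚ R] (a : R) : R :=
  ∑ j ∈ Finset.range (nilpotencyClass a + 1), (j.factorial : ℚ)⁻¹ • a ^ j

/-!
Write `E_n(a)` for the degree-`n` truncation of `exp a`, so that `exp Λ = E_n(Λ) + Λ^{n+1} t`.
Then `E_n(Λ) exp(-Λ) = 1 + r` with `r` a multiple of `Λ^{n+1}`, and `G - Λ` is a logarithm of
`1 + r`. Such a logarithm exists inside any ideal containing a nilpotent `r`: since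
`(1 + r) exp(-r) = 1 + r'` with `r' ∈ r²A`, it is `r` plus a logarithm of `1 + r'`, and `r'` has
smaller nilpotency order. Running the argument in the subalgebra `ℚ[Λ]` makes the logarithm a
polynomial in `Λ`, and it is `G - Λ` because `exp` is injective on nilpotent elements.
-/

open Finset

section Ring

variable {A : Type*} [Ring A] [Algebra ℚ A]

def truncExp (n : ℕ) (a : A) : A :=
  ∑ j ∈ range (n + 1), (j.factorial : ℚ)⁻¹ • a ^ j

theorem truncExp_one (a : A) : truncExp 1 a = 1 + a := by
  simp [truncExp, sum_range_succ]

theorem map_truncExp {B F : Type*} [Ring B] [Algebra ℚ B] [FunLike F A B] [RingHomClass F A B]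
    (f : F) (n : ℕ) (a : A) : f (truncExp n a) = truncExp n (f a) := by
  simp [truncExp, map_rat_smul]

theorem IsNilpotent.exists_exp_eq_truncExp_add {a : A} (ha : IsNilpotent a) (n : ℕ) :
    ∃ t, IsNilpotent.exp a = truncExp n a + a ^ (n + 1) * t := by
  obtain ⟨k, hk⟩ := ha
  refine ⟨∑ j ∈ range k, ((n + 1 + j).factorial : ℚ)⁻¹ • a ^ j, ?_⟩
  rw [IsNilpotent.exp_eq_sum (pow_eq_zero_of_le (Nat.le_add_left k (n + 1)) hk), sum_range_add,
    truncExp, mul_sum]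
  simp_rw [mul_smul_comm, ← pow_add]

end Ring

namespace IsNilpotent

variable {A : Type*} [CommRing A] [Algebra ℚ A]

theorem eq_zero_of_exp_eq_one {d : A} (hd : IsNilpotent d) (h : exp d = 1) : d = 0 := by
  obtain ⟨w, hw⟩ := hd.exists_exp_eq_truncExp_add 1
  rw [h, truncExp_one] at hw
  have hunit : IsUnit (1 + d * w) := ((Commute.all d w).isNilpotent_mul_right hd).isUnit_one_add
  exact hunit.mul_right_eq_zero.mp (by linear_combination -hw)

theorem eq_of_exp_eq {a b : A} (ha : IsNilpotent a) (hb : IsNilpotent b) (h : exp a = exp b) :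
    a = b := by
  have hexp : exp (a - b) = 1 := by
    rw [sub_eq_add_neg, exp_add_of_commute (Commute.all _ _) ha hb.neg, h,
      exp_mul_exp_neg_self hb]
  exact sub_eq_zero.mp (((Commute.all a b).isNilpotent_sub ha hb).eq_zero_of_exp_eq_one hexp)

theorem exists_mem_ideal_exp_eq_one_add {I : Ideal A} {r : A} (hrI : r ∈ I)
    (hr : IsNilpotent r) : ∃ c ∈ I, IsNilpotent c ∧ exp c = 1 + r := by
  obtain ⟨m, hm⟩ := hr
  replace hm : r ^ (m + 1) = 0 := pow_eq_zero_of_le m.le_succ hm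
  induction m generalizing r with
  | zero => exact ⟨0, I.zero_mem, .zero, by rw [exp_zero, ← pow_one r, hm, add_zero]⟩
  | succ m ih =>
    have hr : IsNilpotent r := ⟨_, hm⟩
    obtain ⟨w, hw⟩ := hr.neg.exists_exp_eq_truncExp_add 1
    rw [truncExp_one] at hw
    set r' := r ^ 2 * ((1 + r) * w - 1)
    have hexp : (1 + r) * exp (-r) = 1 + r' := by rw [hw]; ring
    have hr'I : r' ∈ I := I.mul_mem_right _ (I.pow_mem_of_mem hrI 2 two_pos)
    have hr'm : r' ^ (m + 1) = 0 := by
      rw [mul_pow, ← pow_mul, pow_eq_zero_of_le (by omega) hm, zero_mul]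
    obtain ⟨c, hcI, hc, hexpc⟩ := ih hr'I hr'm
    refine ⟨r + c, I.add_mem hrI hcI, (Commute.all r c).isNilpotent_add hr hc, ?_⟩
    rw [exp_add_of_commute (Commute.all r c) hr hc, hexpc, ← hexp, mul_left_comm,
      exp_mul_exp_neg_self hr, mul_one]

theorem exists_mem_span_exp_add_eq_truncExp {a : A} (ha : IsNilpotent a) (n : ℕ) :
    ∃ c ∈ Ideal.span {a ^ (n + 1)}, IsNilpotent c ∧ exp (a + c) = truncExp n a := by
  obtain ⟨t, ht⟩ := ha.exists_exp_eq_truncExp_add n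
  set r := -(t * exp (-a) * a ^ (n + 1))
  have hr : truncExp n a * exp (-a) = 1 + r := by
    rw [← exp_mul_exp_neg_self ha, ht]; ring
  have hrI : r ∈ Ideal.span {a ^ (n + 1)} := neg_mem (Ideal.mem_span_singleton'.mpr ⟨_, rfl⟩)
  have hrnil : IsNilpotent r := ((Commute.all _ _).isNilpotent_mul_left (ha.pow_succ n)).neg
  obtain ⟨c, hcI, hc, hexpc⟩ := exists_mem_ideal_exp_eq_one_add hrI hrnil
  refine ⟨c, hcI, hc, ?_⟩
  rw [exp_add_of_commute (Commute.all a c) ha hc, hexpc, ← hr, mul_left_comm,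
    exp_mul_exp_neg_self ha, mul_one]

theorem nilExp_eq_exp {a : A} (ha : IsNilpotent a) : nilExp a = exp a :=
  (exp_eq_sum (pow_eq_zero_of_le (Nat.le_succ _) (pow_nilpotencyClass ha))).symm

end IsNilpotent

/-- if `G` is the (unique) nilpotent logarithm of the degree-`n`
Taylor truncation `(e^Λ)_n` of the exponential of a nilpotent `Λ`, then
`G = Λ + Λ^{n+1}·q(Λ)` for some polynomial `q` with rational coefficients; i.e.
`G - Λ` lies in the ideal generated by `Λ^{n+1}`. -/
theorem log_of_truncated_exponential_agrees_to_order
    {R : Type*} [CommRing R] [Algebra ℚ R]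
    (Λ : R) (hΛ : IsNilpotent Λ) (n : ℕ)
    (G : R) (hG : IsNilpotent G)
    (hexp : nilExp G = ∑ j ∈ Finset.range (n + 1), (j.factorial : ℚ)⁻¹ • Λ ^ j) :
    ∃ q : Polynomial ℚ, G = Λ + Λ ^ (n + 1) * Polynomial.aeval Λ q := by
  let S := (Polynomial.aeval Λ : Polynomial ℚ →ₐ[ℚ] R).range
  let L : S := ⟨Λ, Polynomial.X, Polynomial.aeval_X Λ⟩
  have hL : IsNilpotent L := (IsNilpotent.map_iff Subtype.val_injective (f := S.val)).mp hΛ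
  obtain ⟨c, hcI, hc, hexpc⟩ := hL.exists_mem_span_exp_add_eq_truncExp n
  have hLc : IsNilpotent (L + c) := (Commute.all L c).isNilpotent_add hL hc
  have hGLc : G = S.val (L + c) := by
    refine hG.eq_of_exp_eq (hLc.map S.val) ?_
    rw [← IsNilpotent.map_exp hLc, hexpc, map_truncExp, ← hG.nilExp_eq_exp, hexp]
    rfl
  obtain ⟨⟨_, q, rfl⟩, rfl⟩ := Ideal.mem_span_singleton'.mp hcI
  exact ⟨q, hGLc.trans (congrArg (Λ + ·) (mul_comm _ _))⟩

end
end

section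
/- Let E be the bivariate Rayleigh quotient of a symmetric matrix H on ℝⁿ with simple ground state (eigenvalue E*, unit eigenvector ψ*) and spectral gap γ > 0. Then at the critical point Z* = (ψ*, ψ*), the flipped Hessian satisfies ⟨RX, ∇²E(Z*) X⟩ ≥ 0 for all X = (u, v) with u, v orthogonal to ψ*, with equality only if X = 0; more precisely ⟨RX, ∇²E(Z*)X⟩ ≥ γ(‖u‖² + ‖v‖²) for such X, where R(u,v) = (v,u). -/
open scoped RealInnerProductSpace

/-!
With `A (u, v) = (T v, T u)` and `S (u, v) = (v, u)`, both symmetric on `F × F`, the bivariate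
Rayleigh quotient is `E Z = ⟪A Z, Z⟫ / ⟪S Z, Z⟫`, whose gradient is
`(2 / ⟪S Z, Z⟫) • (A Z - E Z • S Z)`. At `Z₀ = (ψ, ψ)` we have `A Z₀ = E₀ • S Z₀`, so the bracket
vanishes and only it gets differentiated: `∇²E(Z₀) = A - E₀ • S`, as `⟪S Z₀, Z₀⟫ = 2`.
Pairing with the flip `(v, u)` of `X = (u, v)` gives `⟪u, (T - E₀) u⟫ + ⟪v, (T - E₀) v⟫`, and
expanding in an orthonormal eigenbasis of `T` shows that the spectral gap bounds each term below
by `γ ‖·‖²` on the orthogonal complement of the ground state.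
-/

namespace LinearMap.IsSymmetric

variable {E : Type*} [NormedAddCommGroup E] [InnerProductSpace ℝ E] [FiniteDimensional ℝ E]
  {T : E →ₗ[ℝ] E}

theorem mul_norm_sq_le_inner_apply_self (hT : T.IsSymmetric) {μ₀ c : ℝ}
    (hgap : ∀ μ, Module.End.HasEigenvalue T μ → μ ≠ μ₀ → c ≤ μ) {w : E}
    (hw : w ∈ (Module.End.eigenspace T μ₀)ᗮ) :
    c * ‖w‖ ^ 2 ≤ ⟪w, T w⟫ := by
  set b := hT.eigenvectorBasis rfl
  set μ := hT.eigenvalues rfl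
  have hcoeff : ∀ i, c * ⟪b i, w⟫ ^ 2 ≤ μ i * ⟪b i, w⟫ ^ 2 := by
    intro i
    by_cases hi : μ i = μ₀
    · have hmem : b i ∈ Module.End.eigenspace T μ₀ :=
        hi ▸ (hT.hasEigenvector_eigenvectorBasis rfl i).1
      simp [Submodule.inner_right_of_mem_orthogonal hmem hw]
    · exact mul_le_mul_of_nonneg_right (hgap _ (hT.hasEigenvalue_eigenvalues rfl i) hi)
        (sq_nonneg _)
  calc c * ‖w‖ ^ 2 = ∑ i, c * ⟪b i, w⟫ ^ 2 := by rw [← b.sum_sq_inner_right, Finset.mul_sum]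
    _ ≤ ∑ i, μ i * ⟪b i, w⟫ ^ 2 := Finset.sum_le_sum fun i _ => hcoeff i
    _ = ⟪w, T w⟫ := by
      rw [← b.sum_inner_mul_inner]
      refine Finset.sum_congr rfl fun i _ => ?_
      rw [← hT, hT.apply_eigenvectorBasis, real_inner_smul_left, real_inner_comm w]
      simp only [RCLike.ofReal_real_eq_id, id_eq, μ]
      ring

end LinearMap.IsSymmetric

section PencilRayleighQuotient

variable {H : Type*} [NormedAddCommGroup H] [InnerProductSpace ℝ H] [CompleteSpace H]
  {A S : H →L[ℝ] H}

theorem LinearMap.IsSymmetric.hasGradientAt_reApplyInnerSelf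
    (hA : (A : H →ₗ[ℝ] H).IsSymmetric) (Z : H) :
    HasGradientAt A.reApplyInnerSelf ((2 : ℝ) • A Z) Z := by
  rw [hasGradientAt_iff_hasFDerivAt]
  refine (hA.hasStrictFDerivAt_reApplyInnerSelf Z).hasFDerivAt.congr_fderiv ?_
  ext W
  simp [two_mul]

variable (A S) in
noncomputable def pencilRayleighQuotient (Z : H) : ℝ :=
  A.reApplyInnerSelf Z / S.reApplyInnerSelf Z

theorem hasGradientAt_pencilRayleighQuotient (hA : (A : H →ₗ[ℝ] H).IsSymmetric)
    (hS : (S : H →ₗ[ℝ] H).IsSymmetric) {Z : H} (hZ : S.reApplyInnerSelf Z ≠ 0) :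
    HasGradientAt (pencilRayleighQuotient A S)
      ((2 / S.reApplyInnerSelf Z) • (A Z - pencilRayleighQuotient A S Z • S Z)) Z := by
  have hinv : HasFDerivAt (fun Y => (S.reApplyInnerSelf Y)⁻¹)
      (-(S.reApplyInnerSelf Z ^ 2)⁻¹ • InnerProductSpace.toDual ℝ H ((2 : ℝ) • S Z)) Z :=
    (hasDerivAt_inv hZ).comp_hasFDerivAt Z (hS.hasGradientAt_reApplyInnerSelf Z)
  have hquot : pencilRayleighQuotient A S =
      fun Y => A.reApplyInnerSelf Y * (S.reApplyInnerSelf Y)⁻¹ :=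
    funext fun _ => div_eq_mul_inv _ _
  rw [hasGradientAt_iff_hasFDerivAt, hquot]
  refine ((hA.hasGradientAt_reApplyInnerSelf Z).hasFDerivAt.fun_mul hinv).congr_fderiv ?_
  ext W
  simp only [InnerProductSpace.toDual_apply_apply, add_apply, smul_apply, smul_eq_mul,
    real_inner_smul_left, inner_sub_left, map_smul]
  field_simp
  ring

theorem hasFDerivAt_gradient_pencilRayleighQuotient_of_eq_smul
    (hA : (A : H →ₗ[ℝ] H).IsSymmetric) (hS : (S : H →ₗ[ℝ] H).IsSymmetric) {Z₀ : H} {μ : ℝ}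
    (hZ₀ : S.reApplyInnerSelf Z₀ ≠ 0) (heig : A Z₀ = μ • S Z₀) :
    HasFDerivAt (gradient (pencilRayleighQuotient A S))
      ((2 / S.reApplyInnerSelf Z₀) • (A - μ • S)) Z₀ := by
  have hR : pencilRayleighQuotient A S Z₀ = μ := by
    simp only [pencilRayleighQuotient, ContinuousLinearMap.reApplyInnerSelf_apply, heig,
      real_inner_smul_left, RCLike.re_to_real] at hZ₀ ⊢
    field_simp
  have hcrit : HasFDerivAt (pencilRayleighQuotient A S) (0 : H →L[ℝ] ℝ) Z₀ := by
    simpa [hR, heig] using (hasGradientAt_pencilRayleighQuotient hA hS hZ₀).hasFDerivAt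
  have hresidual :
      HasFDerivAt (fun Z => A Z - pencilRayleighQuotient A S Z • S Z) (A - μ • S) Z₀ := by
    refine (A.hasFDerivAt.sub (hcrit.fun_smul S.hasFDerivAt)).congr_fderiv ?_
    simp [hR]
  have hscale : DifferentiableAt ℝ (fun Z => 2 / S.reApplyInnerSelf Z) Z₀ := by
    simp only [div_eq_mul_inv]
    exact ((hS.hasGradientAt_reApplyInnerSelf Z₀).differentiableAt.fun_inv hZ₀).const_mul 2
  have hgrad : gradient (pencilRayleighQuotient A S) =ᶠ[nhds Z₀]
      fun Z => (2 / S.reApplyInnerSelf Z) • (A Z - pencilRayleighQuotient A S Z • S Z) := by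
    filter_upwards [S.reApplyInnerSelf_continuous.continuousAt.eventually_ne hZ₀] with Z hZ
    exact (hasGradientAt_pencilRayleighQuotient hA hS hZ).gradient
  refine HasFDerivAt.congr_of_eventuallyEq ?_ hgrad
  refine (hscale.hasFDerivAt.fun_smul hresidual).congr_fderiv ?_
  simp [hR, heig]

end PencilRayleighQuotient

section ProdAntidiag

variable {F : Type*} [NormedAddCommGroup F] [InnerProductSpace ℝ F]

noncomputable def prodAntidiag (T : F →L[ℝ] F) : WithLp 2 (F × F) →L[ℝ] WithLp 2 (F × F) :=
  (WithLp.prodContinuousLinearEquiv 2 ℝ F F).symm.toContinuousLinearMap.comp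
    ((T.comp (WithLp.sndL 2 ℝ F F)).prod (T.comp (WithLp.fstL 2 ℝ F F)))

@[simp]
theorem prodAntidiag_apply (T : F →L[ℝ] F) (Z : WithLp 2 (F × F)) :
    prodAntidiag T Z = WithLp.toLp 2 (T Z.ofLp.2, T Z.ofLp.1) :=
  rfl

variable {T : F →L[ℝ] F}

theorem LinearMap.IsSymmetric.prodAntidiag (hT : (T : F →ₗ[ℝ] F).IsSymmetric) :
    (prodAntidiag T : WithLp 2 (F × F) →ₗ[ℝ] WithLp 2 (F × F)).IsSymmetric := by
  intro Z W
  simp only [ContinuousLinearMap.coe_coe, prodAntidiag_apply, WithLp.prod_inner_apply]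
  rw [hT.apply_clm, hT.apply_clm, add_comm]

theorem reApplyInnerSelf_prodAntidiag (hT : (T : F →ₗ[ℝ] F).IsSymmetric)
    (Z : WithLp 2 (F × F)) :
    (prodAntidiag T).reApplyInnerSelf Z = 2 * ⟪Z.ofLp.2, T Z.ofLp.1⟫ := by
  simp only [ContinuousLinearMap.reApplyInnerSelf_apply, prodAntidiag_apply,
    WithLp.prod_inner_apply, RCLike.re_to_real]
  rw [hT.apply_clm, real_inner_comm]
  ring

variable (T) in
noncomputable def bivariateRayleigh (Z : WithLp 2 (F × F)) : ℝ :=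
  ⟪Z.ofLp.2, T Z.ofLp.1⟫ / ⟪Z.ofLp.2, Z.ofLp.1⟫

theorem bivariateRayleigh_eq_pencilRayleighQuotient (hT : (T : F →ₗ[ℝ] F).IsSymmetric) :
    bivariateRayleigh T =
      pencilRayleighQuotient (prodAntidiag T) (prodAntidiag (ContinuousLinearMap.id ℝ F)) := by
  ext Z
  rw [bivariateRayleigh, pencilRayleighQuotient, reApplyInnerSelf_prodAntidiag hT,
    reApplyInnerSelf_prodAntidiag LinearMap.IsSymmetric.id, ContinuousLinearMap.id_apply,
    mul_div_mul_left _ _ two_ne_zero]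

theorem inner_toLp_swap_prodAntidiag (T : F →L[ℝ] F) (u v : F) :
    ⟪WithLp.toLp 2 (v, u), prodAntidiag T (WithLp.toLp 2 (u, v))⟫ = ⟪u, T u⟫ + ⟪v, T v⟫ := by
  simp [add_comm]

end ProdAntidiag

section BivariateRayleigh

variable {F : Type*} [NormedAddCommGroup F] [InnerProductSpace ℝ F] [CompleteSpace F]
  {T : F →L[ℝ] F} {ψ : F} {E₀ : ℝ}

theorem fderiv_gradient_bivariateRayleigh_of_eigenvector (hT : (T : F →ₗ[ℝ] F).IsSymmetric)
    (hψ : ‖ψ‖ = 1) (heig : T ψ = E₀ • ψ) :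
    fderiv ℝ (gradient (bivariateRayleigh T)) (WithLp.toLp 2 (ψ, ψ)) =
      prodAntidiag T - E₀ • prodAntidiag (ContinuousLinearMap.id ℝ F) := by
  have hnorm : (prodAntidiag (ContinuousLinearMap.id ℝ F)).reApplyInnerSelf
      (WithLp.toLp 2 (ψ, ψ)) = 2 := by
    rw [reApplyInnerSelf_prodAntidiag LinearMap.IsSymmetric.id]
    simp [hψ]
  have hcrit : prodAntidiag T (WithLp.toLp 2 (ψ, ψ)) =
      E₀ • prodAntidiag (ContinuousLinearMap.id ℝ F) (WithLp.toLp 2 (ψ, ψ)) := by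
    simp [heig, ← WithLp.toLp_smul]
  rw [bivariateRayleigh_eq_pencilRayleighQuotient hT,
    (hasFDerivAt_gradient_pencilRayleighQuotient_of_eq_smul hT.prodAntidiag
      LinearMap.IsSymmetric.id.prodAntidiag (by rw [hnorm]; exact two_ne_zero) hcrit).fderiv,
    hnorm, div_self two_ne_zero, one_smul]

theorem mul_add_norm_sq_le_inner_swap_fderiv_gradient_bivariateRayleigh
    (hT : (T : F →ₗ[ℝ] F).IsSymmetric) (hψ : ‖ψ‖ = 1) (heig : T ψ = E₀ • ψ) {γ : ℝ}
    (hgap : ∀ w, ⟪w, ψ⟫ = 0 → (E₀ + γ) * ‖w‖ ^ 2 ≤ ⟪w, T w⟫) {u v : F}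
    (hu : ⟪u, ψ⟫ = 0) (hv : ⟪v, ψ⟫ = 0) :
    γ * (‖u‖ ^ 2 + ‖v‖ ^ 2) ≤
      ⟪WithLp.toLp 2 (v, u),
        fderiv ℝ (gradient (bivariateRayleigh T)) (WithLp.toLp 2 (ψ, ψ))
          (WithLp.toLp 2 (u, v))⟫ := by
  rw [fderiv_gradient_bivariateRayleigh_of_eigenvector hT hψ heig, sub_apply, smul_apply,
    inner_sub_right, real_inner_smul_right, inner_toLp_swap_prodAntidiag,
    inner_toLp_swap_prodAntidiag]
  simp only [ContinuousLinearMap.id_apply, real_inner_self_eq_norm_sq]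
  linarith [hgap u hu, hgap v hv]

end BivariateRayleigh

theorem bivariate_rayleigh_flipped_hessian_coercive_general
    {n : ℕ} (T : EuclideanSpace ℝ (Fin n) →L[ℝ] EuclideanSpace ℝ (Fin n))
    (hsym : ∀ x y, ⟪T x, y⟫ = ⟪x, T y⟫)
    (E₀ γ : ℝ)
    (ψ : EuclideanSpace ℝ (Fin n)) (hψ : ‖ψ‖ = 1)
    (heig : T ψ = E₀ • ψ)
    (hsimple : Module.End.eigenspace
        (T : EuclideanSpace ℝ (Fin n) →ₗ[ℝ] EuclideanSpace ℝ (Fin n)) E₀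
      = Submodule.span ℝ {ψ})
    (hgap : ∀ μ ∈ spectrum ℝ T, μ ≠ E₀ → E₀ + γ ≤ μ) :
    ∀ u v : EuclideanSpace ℝ (Fin n), ⟪u, ψ⟫ = 0 → ⟪v, ψ⟫ = 0 →
      γ * (‖u‖ ^ 2 + ‖v‖ ^ 2) ≤
        ⟪(WithLp.equiv 2 (EuclideanSpace ℝ (Fin n) × EuclideanSpace ℝ (Fin n))).symm (v, u),
          fderiv ℝ
            (gradient (fun Z : WithLp 2 (EuclideanSpace ℝ (Fin n) × EuclideanSpace ℝ (Fin n)) =>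
              ⟪(WithLp.equiv 2 _ Z).2, T ((WithLp.equiv 2 _ Z).1)⟫ /
                ⟪(WithLp.equiv 2 _ Z).2, (WithLp.equiv 2 _ Z).1⟫))
            ((WithLp.equiv 2 (EuclideanSpace ℝ (Fin n) × EuclideanSpace ℝ (Fin n))).symm (ψ, ψ))
            ((WithLp.equiv 2 (EuclideanSpace ℝ (Fin n) × EuclideanSpace ℝ (Fin n))).symm (u, v))⟫ := by
  intro u v hu hv
  have hT : (T : EuclideanSpace ℝ (Fin n) →ₗ[ℝ] EuclideanSpace ℝ (Fin n)).IsSymmetric := hsym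
  have hform : ∀ w, ⟪w, ψ⟫ = 0 → (E₀ + γ) * ‖w‖ ^ 2 ≤ ⟪w, T w⟫ := by
    intro w hw
    refine hT.mul_norm_sq_le_inner_apply_self (μ₀ := E₀) (fun μ hμ hne => hgap μ ?_ hne) ?_
    · rw [ContinuousLinearMap.spectrum_eq]
      exact hμ.mem_spectrum
    · rw [hsimple]
      exact Submodule.mem_orthogonal_singleton_iff_inner_left.2 hw
  exact mul_add_norm_sq_le_inner_swap_fderiv_gradient_bivariateRayleigh
    hT hψ heig hform hu hv

/-- flipped-Hessian coercivity of the bivariate Rayleigh quotient of a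
symmetric matrix at the ground-state critical point `Z* = (ψ*, ψ*)`, on the orthogonal
complement of the ground state: `⟪RX, ∇²E(Z*)X⟫ ≥ γ(‖u‖² + ‖v‖²)` for `X = (u, v)`
with `u, v ⟂ ψ*`. -/
theorem bivariate_rayleigh_flipped_hessian_coercive
    {n : ℕ} (T : EuclideanSpace ℝ (Fin n) →L[ℝ] EuclideanSpace ℝ (Fin n))
    (hsym : ∀ x y, ⟪T x, y⟫ = ⟪x, T y⟫)
    (E₀ γ : ℝ) (hγ : 0 < γ)
    (ψ : EuclideanSpace ℝ (Fin n)) (hψ : ‖ψ‖ = 1)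
    (heig : T ψ = E₀ • ψ)
    (hsimple : Module.End.eigenspace
        (T : EuclideanSpace ℝ (Fin n) →ₗ[ℝ] EuclideanSpace ℝ (Fin n)) E₀
      = Submodule.span ℝ {ψ})
    (hgap : ∀ μ ∈ spectrum ℝ T, μ ≠ E₀ → E₀ + γ ≤ μ) :
    ∀ u v : EuclideanSpace ℝ (Fin n), ⟪u, ψ⟫ = 0 → ⟪v, ψ⟫ = 0 →
      γ * (‖u‖ ^ 2 + ‖v‖ ^ 2) ≤
        ⟪(WithLp.equiv 2 (EuclideanSpace ℝ (Fin n) × EuclideanSpace ℝ (Fin n))).symm (v, u),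
          fderiv ℝ
            (gradient (fun Z : WithLp 2 (EuclideanSpace ℝ (Fin n) × EuclideanSpace ℝ (Fin n)) =>
              ⟪(WithLp.equiv 2 _ Z).2, T ((WithLp.equiv 2 _ Z).1)⟫ /
                ⟪(WithLp.equiv 2 _ Z).2, (WithLp.equiv 2 _ Z).1⟫))
            ((WithLp.equiv 2 (EuclideanSpace ℝ (Fin n) × EuclideanSpace ℝ (Fin n))).symm (ψ, ψ))
            ((WithLp.equiv 2 (EuclideanSpace ℝ (Fin n) × EuclideanSpace ℝ (Fin n))).symm (u, v))⟫ :=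
  bivariate_rayleigh_flipped_hessian_coercive_general T hsym E₀ γ ψ hψ heig hsimple hgap
end
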